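/- arXiv:1602.01033 — 2 statements merged into one kernel-verified Lean document; each statement's English description precedes it below -/
import Mathlib

section
/- If G is a graph of order n such that d(u) + d(v) ≥ n for every pair of distinct nonadjacent vertices u and v, then G has a Hamiltonian cycle. -/
open SimpleGraph Finset

/-- Spectral radius (largest adjacency eigenvalue) of a graph on `Fin n`. -/
noncomputable def specRad {n : ℕ} (G : SimpleGraph (Fin n)) : ℝ :=
  haveI := Classical.decRel G.Adj
  ⨆ i, (Matrix.IsHermitian.eigenvalues
    (by
      rw [Matrix.IsHermitian, Matrix.conjTranspose_eq_transpose_of_trivial]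
      exact G.isSymm_adjMatrix : (G.adjMatrix ℝ).IsHermitian)) i

/-- `M_k(n) = K_k ∨ (K_{n-2k} + K̄_k)`: vertices `0..k-1` are the independent set,
vertices `k..2k-1` their joint neighborhood, vertices `k..n-1` a clique. -/
def Mgraph (k n : ℕ) : SimpleGraph (Fin n) where
  Adj i j := i ≠ j ∧ ((k ≤ i.val ∧ k ≤ j.val) ∨
    (i.val < k ∧ k ≤ j.val ∧ j.val < 2 * k) ∨ (j.val < k ∧ k ≤ i.val ∧ i.val < 2 * k))
  symm := ⟨by intro i j h; exact ⟨h.1.symm, by tauto⟩⟩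
  loopless := ⟨by intro i h; exact h.1 rfl⟩

instance (k n : ℕ) : DecidableRel (Mgraph k n).Adj := fun _ _ => instDecidableAnd

/-- `L_k(n) = K_1 ∨ (K_{n-k-1} + K_k)`: a `K_{k+1}` on vertices `0..k` and a
`K_{n-k}` on vertices `k..n-1`, sharing the vertex `k`. -/
def Lgraph (k n : ℕ) : SimpleGraph (Fin n) where
  Adj i j := i ≠ j ∧ ((i.val ≤ k ∧ j.val ≤ k) ∨ (k ≤ i.val ∧ k ≤ j.val))
  symm := ⟨by intro i j h; exact ⟨h.1.symm, by tauto⟩⟩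
  loopless := ⟨by intro i h; exact h.1 rfl⟩

instance (k n : ℕ) : DecidableRel (Lgraph k n).Adj := fun _ _ => instDecidableAnd

/-- `N_k(n) = K_k ∨ (K_{n-2k-1} + K̄_{k+1})`: vertices `0..k` are the independent set,
vertices `k+1..2k` their joint neighborhood, vertices `k+1..n-1` a clique. -/
def Ngraph (k n : ℕ) : SimpleGraph (Fin n) where
  Adj i j := i ≠ j ∧ ((k + 1 ≤ i.val ∧ k + 1 ≤ j.val) ∨
    (i.val < k + 1 ∧ k + 1 ≤ j.val ∧ j.val < 2 * k + 1) ∨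
    (j.val < k + 1 ∧ k + 1 ≤ i.val ∧ i.val < 2 * k + 1))
  symm := ⟨by intro i j h; exact ⟨h.1.symm, by tauto⟩⟩
  loopless := ⟨by intro i h; exact h.1 rfl⟩

instance (k n : ℕ) : DecidableRel (Ngraph k n).Adj := fun _ _ => instDecidableAnd

/-- The disjoint union `K_a + K_{n-a}` on `Fin n`: vertices `0..a-1` form one clique,
vertices `a..n-1` the other. -/
def DUgraph (a n : ℕ) : SimpleGraph (Fin n) where
  Adj i j := i ≠ j ∧ ((i.val < a ∧ j.val < a) ∨ (a ≤ i.val ∧ a ≤ j.val))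
  symm := ⟨by intro i j h; exact ⟨h.1.symm, by tauto⟩⟩
  loopless := ⟨by intro i h; exact h.1 rfl⟩

instance (a n : ℕ) : DecidableRel (DUgraph a n).Adj := fun _ _ => instDecidableAnd

/-- `G` has a Hamiltonian path. -/
def HasHamiltonianPath {V : Type*} [DecidableEq V] (G : SimpleGraph V) : Prop :=
  ∃ (u v : V) (p : G.Walk u v), p.IsHamiltonian

/-- `G` is Hamiltonian-connected. -/
def HamiltonianConnected {V : Type*} [DecidableEq V] (G : SimpleGraph V) : Prop :=
  ∀ u v : V, u ≠ v → ∃ p : G.Walk u v, p.IsHamiltonian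

/-!
Ore's condition is inherited by supergraphs, and the complete graph is Hamiltonian, so it suffices
to show (Bondy–Chvátal) that adding an edge `uv` with `d(u) + d(v) ≥ n` cannot create
Hamiltonicity. A Hamiltonian cycle of `G + uv` either avoids `uv` or yields a Hamiltonian path
`u = p₀, …, p_{n-1} = v` in `G`. The sets `{i | u ~ pᵢ₊₁}` and `{i | v ~ pᵢ}` lie in
`{0, …, n - 2}` and have sizes `d(u)` and `d(v)`, so they meet in some `i`; then
`u, …, pᵢ, v, p_{n-2}, …, pᵢ₊₁, u` is a Hamiltonian cycle of `G`.
-/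

namespace SimpleGraph

variable {V : Type*} {G : SimpleGraph V} {u v : V}

namespace Walk

lemma IsHamiltonian.reverse [DecidableEq V] {p : G.Walk u v} (hp : p.IsHamiltonian) :
    p.reverse.IsHamiltonian := fun w => by
  rw [support_reverse, List.count_reverse]
  exact hp w

lemma IsHamiltonian.transfer [Fintype V] [DecidableEq V] {H : SimpleGraph V} {p : G.Walk u v}
    (hp : p.IsHamiltonian) (hH : ∀ e ∈ p.edges, e ∈ H.edgeSet) :
    (p.transfer H hH).IsHamiltonian :=
  isHamiltonian_iff_isPath_and_length_eq.mpr
    ⟨hp.isPath.transfer hH, by rw [length_transfer, hp.length_eq]⟩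

lemma IsHamiltonianCycle.transfer [Fintype V] [DecidableEq V] {H : SimpleGraph V}
    {c : G.Walk u u} (hc : c.IsHamiltonianCycle) (hH : ∀ e ∈ c.edges, e ∈ H.edgeSet) :
    (c.transfer H hH).IsHamiltonianCycle :=
  isHamiltonianCycle_iff_isCycle_and_length_eq.mpr
    ⟨hc.isCycle.transfer hH, by rw [length_transfer, hc.length_eq]⟩

lemma IsCycle.eq_snd_or_eq_penultimate_of_mem_edges {c : G.Walk u u} (hc : c.IsCycle)
    (he : s(u, v) ∈ c.edges) : v = c.snd ∨ v = c.penultimate := by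
  rw [← c.cons_tail_eq hc.not_nil, edges_cons, List.mem_cons] at he
  rcases he with he | he
  · exact .inl (Sym2.congr_right.mp he)
  · right
    have hlen := hc.three_le_length
    rw [hc.isPath_tail.eq_penultimate_of_mem_edges he, penultimate, getVert_tail, length_tail]
    congr 1
    omega

lemma IsHamiltonianCycle.exists_isHamiltonian_of_mem_edges [Fintype V] [DecidableEq V]
    {c : G.Walk u u} (hc : c.IsHamiltonianCycle) (he : s(u, v) ∈ c.edges) :
    ∃ p : G.Walk u v, p.IsHamiltonian := by
  rcases hc.isCycle.eq_snd_or_eq_penultimate_of_mem_edges he with rfl | rfl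
  · exact ⟨c.tail.reverse, hc.isHamiltonian_tail.reverse⟩
  · refine ⟨c.dropLast, isHamiltonian_iff_isPath_and_length_eq.mpr
      ⟨hc.isCycle.isPath_dropLast, ?_⟩⟩
    rw [length_dropLast, hc.length_eq]

lemma IsHamiltonian.isHamiltonianCycle_cons [Fintype V] [DecidableEq V] {p : G.Walk u v}
    (hp : p.IsHamiltonian) (h : G.Adj v u) (hcard : 3 ≤ Fintype.card V) :
    (cons h p).IsHamiltonianCycle := by
  have hlen := hp.length_eq
  refine isHamiltonianCycle_iff_isCycle_and_length_eq.mpr ⟨?_, by rw [length_cons]; omega⟩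
  refine (cons_isCycle_iff p h).mpr ⟨hp.isPath, fun he => ?_⟩
  have := hp.isPath.length_eq_one_of_mem_edges (Sym2.eq_swap ▸ he)
  omega

lemma IsHamiltonian.sum_getVert [DecidableEq V] [Fintype V] {M : Type*} [AddCommMonoid M]
    {p : G.Walk u v} (hp : p.IsHamiltonian) (f : V → M) :
    ∑ i ∈ range (p.length + 1), f (p.getVert i) = ∑ w, f w := by
  refine sum_nbij p.getVert (fun _ _ => mem_univ _) ?_ ?_ fun _ _ => rfl
  · intro i hi j hj hij
    exact hp.isPath.getVert_injOn (by simpa [Nat.lt_succ_iff] using hi)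
      (by simpa [Nat.lt_succ_iff] using hj) hij
  · intro w _
    obtain ⟨i, rfl, hi⟩ := (mem_support_iff_exists_getVert).mp (hp.mem_support w)
    exact ⟨i, by simpa [Nat.lt_succ_iff] using hi, rfl⟩

lemma IsHamiltonian.degree_eq_sum_getVert [DecidableEq V] [Fintype V] [DecidableRel G.Adj]
    {p : G.Walk u v} (hp : p.IsHamiltonian) (w : V) :
    G.degree w = ∑ i ∈ range (p.length + 1), if G.Adj w (p.getVert i) then 1 else 0 := by
  rw [hp.sum_getVert (fun x => if G.Adj w x then 1 else 0), sum_boole,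
    ← card_neighborFinset_eq_degree, neighborFinset_eq_filter]
  simp

lemma IsHamiltonian.exists_crossing [DecidableEq V] [Fintype V] [DecidableRel G.Adj]
    {p : G.Walk u v} (hp : p.IsHamiltonian)
    (hdeg : Fintype.card V ≤ G.degree u + G.degree v) :
    ∃ i < p.length, G.Adj u (p.getVert (i + 1)) ∧ G.Adj v (p.getVert i) := by
  by_contra! hno
  have hsum : G.degree u + G.degree v = ∑ i ∈ range p.length,
      ((if G.Adj u (p.getVert (i + 1)) then 1 else 0) +
        (if G.Adj v (p.getVert i) then 1 else 0)) := by
    rw [sum_add_distrib, hp.degree_eq_sum_getVert u, hp.degree_eq_sum_getVert v,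
      sum_range_succ', sum_range_succ]
    simp
  have hle : G.degree u + G.degree v ≤ p.length := by
    rw [hsum]
    calc _ ≤ ∑ _i ∈ range p.length, 1 := sum_le_sum fun i hi => by
            have := hno i (mem_range.mp hi)
            split_ifs <;> simp_all
      _ = p.length := by simp
  have := hp.length_eq
  have := Fintype.card_pos_iff.mpr ⟨u⟩
  omega

lemma edges_subset_edgeSet_of_sup_edge {x y : V} {p : (G ⊔ edge u v).Walk x y}
    (hp : s(u, v) ∉ p.edges) : ∀ e ∈ p.edges, e ∈ G.edgeSet := by
  intro e he
  have hsup := p.edges_subset_edgeSet he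
  rw [edgeSet_sup, Set.mem_union] at hsup
  rcases hsup with hG | huv
  · exact hG
  · rw [Set.mem_singleton_iff.mp (edgeSet_edge_subset huv)] at he
    exact absurd he hp

end Walk

open Walk

theorem isHamiltonian_of_isHamiltonian_walk [Fintype V] [DecidableEq V] [DecidableRel G.Adj]
    (hcard : 3 ≤ Fintype.card V) (hdeg : Fintype.card V ≤ G.degree u + G.degree v)
    {p : G.Walk u v} (hp : p.IsHamiltonian) : G.IsHamiltonian := by
  obtain ⟨i, hi, hu, hv⟩ := hp.exists_crossing hdeg
  -- `q` is the path `u → ⋯ → pᵢ → v → ⋯ → pᵢ₊₁`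
  set q := (p.take i).append (cons hv.symm (p.drop (i + 1)).reverse)
  have hperm : q.support.Perm p.support := by
    have hmin : (i + 1) ⊓ p.length = i + 1 := min_eq_left hi
    rw [support_append, support_cons, List.tail_cons, support_reverse, support_take,
      drop_support_eq_support_drop_min, hmin]
    exact ((List.reverse_perm _).append_left _).trans (by rw [List.take_append_drop])
  have hq : q.IsHamiltonian := fun w => hperm.count_eq w ▸ hp w
  exact fun _ => ⟨_, _, hq.isHamiltonianCycle_cons hu.symm hcard⟩

theorem isHamiltonian_of_isHamiltonian_sup_edge [Fintype V] [DecidableEq V] [DecidableRel G.Adj]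
    (hcard : 3 ≤ Fintype.card V) (huv : u ≠ v)
    (hdeg : Fintype.card V ≤ G.degree u + G.degree v) (hH : (G ⊔ edge u v).IsHamiltonian) :
    G.IsHamiltonian := by
  have : Nontrivial V := ⟨⟨u, v, huv⟩⟩
  obtain ⟨c, hc⟩ := hH.exists_isHamiltonianCycle u
  by_cases he : s(u, v) ∈ c.edges
  · obtain ⟨p, hp⟩ := hc.exists_isHamiltonian_of_mem_edges he
    have hpe : s(u, v) ∉ p.edges := fun he' => by
      have := hp.isPath.length_eq_one_of_mem_edges he'
      have := hp.length_eq
      omega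
    exact isHamiltonian_of_isHamiltonian_walk hcard hdeg
      (hp.transfer (edges_subset_edgeSet_of_sup_edge hpe))
  · exact fun _ => ⟨u, _, hc.transfer (edges_subset_edgeSet_of_sup_edge he)⟩

theorem isHamiltonian_top [Fintype V] [DecidableEq V] (hcard : 3 ≤ Fintype.card V) :
    (⊤ : SimpleGraph V).IsHamiltonian := by
  obtain ⟨k, hk⟩ := Nat.exists_eq_add_of_le' hcard
  let e := (Fintype.equivFinOfCardEq hk).symm
  let f : cycleGraph (k + 3) →g (⊤ : SimpleGraph V) := ⟨e, fun h => e.injective.ne h.ne⟩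
  have hcyc : (cycleGraph.cycle k).IsHamiltonianCycle :=
    isHamiltonianCycle_iff_isCycle_and_length_eq.mpr ⟨cycleGraph.isCycle_cycle, by simp⟩
  exact fun _ => ⟨_, _, hcyc.map (f := f) e.bijective⟩

theorem isHamiltonian_of_card_le_degree_add_degree [Fintype V] [DecidableEq V]
    [DecidableRel G.Adj] (hcard : 3 ≤ Fintype.card V)
    (hG : ∀ u v, u ≠ v → ¬G.Adj u v → Fintype.card V ≤ G.degree u + G.degree v) :
    G.IsHamiltonian := by
  classical
  suffices ∀ H : SimpleGraph V, G ≤ H → H.IsHamiltonian from this G le_rfl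
  intro H hGH
  induction H using WellFoundedGT.induction with
  | _ H ih =>
  by_cases htop : H = ⊤
  · exact htop ▸ isHamiltonian_top hcard
  obtain ⟨u, v, huv, hnadj⟩ : ∃ u v, u ≠ v ∧ ¬H.Adj u v := by
    by_contra! h
    exact htop (eq_top_iff.mpr fun u v huv => h u v huv)
  have hdeg : Fintype.card V ≤ H.degree u + H.degree v :=
    (hG u v huv fun h => hnadj (hGH h)).trans
      (add_le_add (degree_le_of_le hGH) (degree_le_of_le hGH))
  exact isHamiltonian_of_isHamiltonian_sup_edge hcard huv hdeg
    (ih _ (H.lt_sup_edge u v huv hnadj) (hGH.trans le_sup_left))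

end SimpleGraph

/-- Ore's theorem: if `d(u) + d(v) ≥ n` for all distinct nonadjacent `u, v`,
then `G` has a Hamiltonian cycle. -/
theorem stmt_2 (n : ℕ) (hn : 3 ≤ n) (G : SimpleGraph (Fin n)) [DecidableRel G.Adj]
    (h : ∀ u v : Fin n, u ≠ v → ¬ G.Adj u v → n ≤ G.degree u + G.degree v) :
    G.IsHamiltonian :=
  isHamiltonian_of_card_le_degree_add_degree (by simpa using hn) (by simpa using h)
end

section
/- If k ≥ 2 and 2k+1 ≤ n ≤ k³/2 + k + 1, then there exists a graph G of order n with minimum degree δ(G) ≥ k such that G is a proper spanning subgraph of M_k(n) and λ(G) > n - k - 1. -/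
open SimpleGraph Finset

/-!
Delete from `M_k(n)` one clique edge `ab` with `a` in the core (the `k` vertices joined to the
independent set). Every degree stays at least `k` provided `b` also lies in the core, or
`n ≥ 2k + 2`. For the spectral radius take the Rayleigh quotient of the vector `x` equal to `k` on
the independent set and to `m = n - k - 1` on the clique, lowered to `m - 1` at `b`. A direct
computation gives `xᵀAx - m‖x‖² = m (k³ - 2m + 1) - 2k² [b ∈ core]`, which is positive for
`b = k + 1` when `n = 2k + 1`, and for `b = n - 1` when `n ≥ 2k + 2` and `2m ≤ k³`.
-/

open Matrix

theorem Matrix.IsHermitian.dotProduct_mulVec_le_iSup_eigenvalues_mul {ι : Type*} [Fintype ι]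
    [DecidableEq ι] {A : Matrix ι ι ℝ} (hA : A.IsHermitian) (x : ι → ℝ) :
    x ⬝ᵥ (A *ᵥ x) ≤ (⨆ i, hA.eigenvalues i) * (x ⬝ᵥ x) := by
  rcases isEmpty_or_nonempty ι with hι | hι
  · simp [dotProduct]
  set U : Matrix ι ι ℝ := (hA.eigenvectorUnitary : Matrix ι ι ℝ)
  have hUU : U * Uᵀ = 1 := by
    rw [← conjTranspose_eq_transpose_of_trivial, ← star_eq_conjTranspose]
    exact mem_unitaryGroup_iff.mp hA.eigenvectorUnitary.2
  set y := Uᵀ *ᵥ x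
  have hyy : y ⬝ᵥ y = x ⬝ᵥ x := by
    rw [dotProduct_mulVec, vecMul_transpose, mulVec_mulVec, hUU, one_mulVec]
  have hdiag : x ⬝ᵥ (A *ᵥ x) = ∑ i, hA.eigenvalues i * y i ^ 2 := by
    conv_lhs => rw [hA.spectral_theorem, Unitary.conjStarAlgAut_apply]
    rw [star_eq_conjTranspose, conjTranspose_eq_transpose_of_trivial, ← mulVec_mulVec,
      ← mulVec_mulVec, dotProduct_mulVec, ← mulVec_transpose]
    simp [mulVec_diagonal, dotProduct, sq, mul_left_comm]
    rfl
  have hbdd : BddAbove (Set.range hA.eigenvalues) := (Set.finite_range _).bddAbove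
  calc x ⬝ᵥ (A *ᵥ x) = ∑ i, hA.eigenvalues i * y i ^ 2 := hdiag
    _ ≤ ∑ i, (⨆ j, hA.eigenvalues j) * y i ^ 2 :=
        sum_le_sum fun i _ => by gcongr; exact le_ciSup hbdd i
    _ = (⨆ i, hA.eigenvalues i) * (x ⬝ᵥ x) := by
        rw [← mul_sum, ← hyy]; simp [dotProduct, sq]

theorem lt_specRad_of_mul_dotProduct_lt {n : ℕ} (G : SimpleGraph (Fin n)) [DecidableRel G.Adj]
    {c : ℝ} (x : Fin n → ℝ) (h : c * (x ⬝ᵥ x) < x ⬝ᵥ (G.adjMatrix ℝ *ᵥ x)) : c < specRad G := by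
  obtain rfl : ‹DecidableRel G.Adj› = Classical.decRel _ := Subsingleton.elim _ _
  refine lt_of_mul_lt_mul_right (h.trans_le ?_) (dotProduct_self_star_nonneg x)
  exact IsHermitian.dotProduct_mulVec_le_iSup_eigenvalues_mul _ x

theorem Matrix.dotProduct_ite_mem {ι : Type*} [Fintype ι] [DecidableEq ι] (s : Finset ι)
    (x : ι → ℝ) : x ⬝ᵥ (fun i => if i ∈ s then 1 else 0) = ∑ i ∈ s, x i := by
  simp [dotProduct]

theorem Fin.card_filter_val_mem_Ico {n a b : ℕ} (hb : b ≤ n) :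
    #({i | a ≤ i.val ∧ i.val < b} : Finset (Fin n)) = b - a := by
  rw [← Nat.card_Ico, ← card_map Fin.valEmbedding]
  congr 1
  ext v
  simp only [mem_map, mem_filter, mem_univ, true_and, Fin.valEmbedding_apply, mem_Ico]
  exact ⟨fun ⟨i, hi, hiv⟩ => hiv ▸ hi, fun hv => ⟨⟨v, by omega⟩, hv, rfl⟩⟩

namespace SimpleGraph

variable {V : Type*} (G : SimpleGraph V) {a b : V}

theorem deleteEdges_singleton_lt (hab : G.Adj a b) : G.deleteEdges {s(a, b)} < G :=
  (G.deleteEdges_le _).lt_of_ne fun h =>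
    Set.disjoint_singleton_right.mp (deleteEdges_eq_self.mp h) hab

variable [DecidableEq V] [DecidableRel G.Adj]

theorem adjMatrix_deleteEdges_singleton (hab : G.Adj a b) :
    (G.deleteEdges {s(a, b)}).adjMatrix ℝ = G.adjMatrix ℝ - (single a b 1 + single b a 1) := by
  ext i j
  by_cases h : s(i, j) = s(a, b)
  · rcases Sym2.eq_iff.mp h with ⟨rfl, rfl⟩ | ⟨rfl, rfl⟩ <;>
      simp [adjMatrix_apply, hab, hab.symm, hab.ne, hab.ne.symm]
  · have hij : ¬(a = i ∧ b = j) ∧ ¬(b = i ∧ a = j) := by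
      constructor <;> rintro ⟨rfl, rfl⟩ <;> simp at h
    simp [adjMatrix_apply, h, hij.1, hij.2]

theorem dotProduct_adjMatrix_deleteEdges_mulVec [Fintype V] (hab : G.Adj a b) (x : V → ℝ) :
    x ⬝ᵥ ((G.deleteEdges {s(a, b)}).adjMatrix ℝ *ᵥ x) =
      x ⬝ᵥ (G.adjMatrix ℝ *ᵥ x) - 2 * (x a * x b) := by
  rw [adjMatrix_deleteEdges_singleton G hab, sub_mulVec, add_mulVec, dotProduct_sub,
    dotProduct_add, single_mulVec_eq, single_mulVec_eq]
  simp [dotProduct_smul]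
  ring

variable [Fintype V] (v : V)

theorem degree_deleteEdges_singleton_of_ne (hva : v ≠ a) (hvb : v ≠ b) :
    (G.deleteEdges {s(a, b)}).degree v = G.degree v := by
  simp only [← card_neighborFinset_eq_degree]
  congr 1
  ext w
  simp only [mem_neighborFinset, deleteEdges_adj, Set.mem_singleton_iff, Sym2.eq_iff]
  tauto

theorem degree_le_degree_deleteEdges_singleton_add_one :
    G.degree v ≤ (G.deleteEdges {s(a, b)}).degree v + 1 := by
  simp only [← card_neighborFinset_eq_degree]
  refine (card_le_card (t := insert (if v = a then b else a) _) ?_).trans (card_insert_le _ _)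
  intro w hw
  rw [mem_neighborFinset] at hw
  rw [mem_insert, mem_neighborFinset, deleteEdges_adj, Set.mem_singleton_iff, Sym2.eq_iff]
  have hwv := hw.ne'
  split_ifs with hva
  · subst hva; tauto
  · tauto

end SimpleGraph

namespace Mgraph

variable {k n : ℕ}

theorem adj_iff {i j : Fin n} : (Mgraph k n).Adj i j ↔ i ≠ j ∧ ((k ≤ i.val ∧ k ≤ j.val) ∨
    (i.val < k ∧ k ≤ j.val ∧ j.val < 2 * k) ∨ (j.val < k ∧ k ≤ i.val ∧ i.val < 2 * k)) :=
  Iff.rfl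

variable (k n)

def indep : Finset (Fin n) := {i | i.val < k}

def core : Finset (Fin n) := {i | k ≤ i.val ∧ i.val < 2 * k}

def clique : Finset (Fin n) := {i | k ≤ i.val}

variable {k n}

@[simp] theorem mem_indep {i : Fin n} : i ∈ indep k n ↔ i.val < k := by simp [indep]

@[simp] theorem mem_core {i : Fin n} : i ∈ core k n ↔ k ≤ i.val ∧ i.val < 2 * k := by simp [core]

@[simp] theorem mem_clique {i : Fin n} : i ∈ clique k n ↔ k ≤ i.val := by simp [clique]

theorem card_indep (h : k ≤ n) : #(indep k n) = k := by
  simpa [indep] using Fin.card_filter_val_mem_Ico (a := 0) h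

theorem card_core (h : 2 * k ≤ n) : #(core k n) = k := by
  rw [core, Fin.card_filter_val_mem_Ico h]; omega

theorem card_clique : #(clique k n) = n - k := by
  simpa [clique] using Fin.card_filter_val_mem_Ico (a := k) le_rfl

theorem adj_of_mem_clique {a b : Fin n} (ha : a ∈ clique k n) (hb : b ∈ clique k n)
    (hab : a ≠ b) : (Mgraph k n).Adj a b :=
  ⟨hab, Or.inl ⟨mem_clique.mp ha, mem_clique.mp hb⟩⟩

theorem degree_of_mem_indep (h : 2 * k ≤ n) {v : Fin n} (hv : v ∈ indep k n) :
    (Mgraph k n).degree v = k := by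
  rw [← card_neighborFinset_eq_degree]
  convert card_core h using 2
  ext w
  simp only [mem_neighborFinset, adj_iff, mem_core, mem_indep, ne_eq, Fin.ext_iff] at hv ⊢
  omega

theorem degree_of_mem_core {v : Fin n} (hv : v ∈ core k n) : (Mgraph k n).degree v = n - 1 := by
  rw [← card_neighborFinset_eq_degree, show n - 1 = #(univ.erase v) by simp [card_erase_of_mem]]
  congr 1
  ext w
  simp only [mem_neighborFinset, adj_iff, mem_core, mem_erase, mem_univ, and_true, ne_eq,
    Fin.ext_iff] at hv ⊢
  omega

theorem degree_of_mem_clique_of_notMem_core {v : Fin n} (hv : v ∈ clique k n)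
    (hv' : v ∉ core k n) : (Mgraph k n).degree v = n - k - 1 := by
  rw [← card_neighborFinset_eq_degree,
    show n - k - 1 = #((clique k n).erase v) by rw [card_erase_of_mem hv, card_clique]]
  congr 1
  ext w
  simp only [mem_neighborFinset, adj_iff, mem_core, mem_clique, mem_erase, ne_eq,
    Fin.ext_iff] at hv hv' ⊢
  omega

theorem le_minDegree_deleteEdges (hn : 2 * k + 1 ≤ n) {a b : Fin n} (ha : a.val = k)
    (hb : k < b.val) (hb_core : b ∈ core k n ∨ 2 * k + 2 ≤ n) :
    k ≤ ((Mgraph k n).deleteEdges {s(a, b)}).minDegree := by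
  have : Nonempty (Fin n) := ⟨a⟩
  refine le_minDegree_of_forall_le_degree _ k fun v => ?_
  have hdrop := degree_le_degree_deleteEdges_singleton_add_one (Mgraph k n) (a := a) (b := b) v
  by_cases hv : v ∈ indep k n
  · have hva : v ≠ a := fun h => by simp [h, ha] at hv
    have hvb : v ≠ b := fun h => by simp [h] at hv; omega
    rw [degree_deleteEdges_singleton_of_ne _ v hva hvb, degree_of_mem_indep (by omega) hv]
  by_cases hvc : v ∈ core k n
  · rw [degree_of_mem_core hvc] at hdrop
    omega
  have hdeg := degree_of_mem_clique_of_notMem_core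
    (mem_clique.mpr (not_lt.mp (mem_indep.not.mp hv))) hvc
  by_cases hvab : v = a ∨ v = b
  · rw [hdeg] at hdrop
    rcases hvab with rfl | rfl <;> simp only [mem_core, ha] at hvc hb_core <;> omega
  · rw [not_or] at hvab
    rw [degree_deleteEdges_singleton_of_ne _ v hvab.1 hvab.2, hdeg]
    omega

theorem dotProduct_adjMatrix_mulVec (x : Fin n → ℝ) :
    x ⬝ᵥ ((Mgraph k n).adjMatrix ℝ *ᵥ x) = (∑ i ∈ clique k n, x i) ^ 2 -
      ∑ i ∈ clique k n, x i ^ 2 + 2 * (∑ i ∈ indep k n, x i) * ∑ i ∈ core k n, x i := by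
  set χ : Finset (Fin n) → Fin n → ℝ := fun s i => if i ∈ s then 1 else 0
  have hA : (Mgraph k n).adjMatrix ℝ = vecMulVec (χ (clique k n)) (χ (clique k n)) -
      diagonal (χ (clique k n)) + vecMulVec (χ (indep k n)) (χ (core k n)) +
      vecMulVec (χ (core k n)) (χ (indep k n)) := by
    ext i j
    simp only [χ, adjMatrix_apply, adj_iff, Matrix.add_apply, Matrix.sub_apply, vecMulVec_apply,
      diagonal_apply, mem_clique, mem_indep, mem_core, ne_eq, Fin.ext_iff]
    split_ifs <;> (try norm_num) <;> omega
  have hdiag : x ⬝ᵥ (diagonal (χ (clique k n)) *ᵥ x) = ∑ i ∈ clique k n, x i ^ 2 := by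
    simp [χ, dotProduct, mulVec_diagonal, sq, ← sum_filter, clique]
  simp only [hA, add_mulVec, sub_mulVec, vecMulVec_mulVec, dotProduct_add, dotProduct_sub, hdiag,
    op_smul_eq_smul, dotProduct_smul, smul_eq_mul]
  simp only [χ, dotProduct_comm _ x, dotProduct_ite_mem]
  ring

/-- On `M_k(n)` the vector with value `k` on `indep` and `m = n - k - 1` on `clique` satisfies
`A x ≥ m x`, with equality off the core; lowering it by one at `b` offsets the deleted edge. -/
def testVector (k n : ℕ) (b : Fin n) : Fin n → ℝ := fun i =>
  if i.val < k then k else if i = b then (n : ℝ) - k - 2 else (n : ℝ) - k - 1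

variable {b : Fin n}

theorem sum_testVector_indep (h : k ≤ n) (f : ℝ → ℝ) :
    ∑ i ∈ indep k n, f (testVector k n b i) = k * f k := by
  rw [sum_congr rfl fun i hi => by rw [testVector, if_pos (mem_indep.mp hi)], sum_const,
    card_indep h, nsmul_eq_mul]

theorem sum_testVector_of_subset_clique {s : Finset (Fin n)} (hs : s ⊆ clique k n)
    (f : ℝ → ℝ) : ∑ i ∈ s, f (testVector k n b i) = #s * f (n - k - 1) +
      if b ∈ s then f (n - k - 2) - f (n - k - 1) else 0 := by
  have hterm : ∀ i ∈ s, f (testVector k n b i) =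
      f (n - k - 1) + if i = b then f (n - k - 2) - f (n - k - 1) else 0 := by
    intro i hi
    rw [testVector, if_neg (not_lt.mpr (mem_clique.mp (hs hi)))]
    split_ifs <;> ring
  rw [sum_congr rfl hterm, sum_add_distrib, sum_const, nsmul_eq_mul, sum_ite_eq']

theorem dotProduct_adjMatrix_deleteEdges_mulVec_testVector (h : 2 * k ≤ n) {a : Fin n}
    (ha : a.val = k) (hb : k < b.val) :
    testVector k n b ⬝ᵥ (((Mgraph k n).deleteEdges {s(a, b)}).adjMatrix ℝ *ᵥ testVector k n b) -
      (n - k - 1) * (testVector k n b ⬝ᵥ testVector k n b) =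
      (n - k - 1) * (k ^ 3 - 2 * (n - k - 1) + 1) -
        if b ∈ core k n then 2 * (k : ℝ) ^ 2 else 0 := by
  have hb_clique : b ∈ clique k n := mem_clique.mpr hb.le
  have hab : (Mgraph k n).Adj a b :=
    adj_of_mem_clique (mem_clique.mpr ha.ge) hb_clique (by rw [ne_eq, Fin.ext_iff]; omega)
  have hxa : testVector k n b a = n - k - 1 := by simp [testVector, ha, hab.ne]
  have hxb : testVector k n b b = n - k - 2 := by simp [testVector, not_lt.mpr hb.le]
  have hcore_clique : core k n ⊆ clique k n := fun i hi => mem_clique.mpr (mem_core.mp hi).1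
  have hsq : testVector k n b ⬝ᵥ testVector k n b =
      ∑ i ∈ indep k n, testVector k n b i ^ 2 + ∑ i ∈ clique k n, testVector k n b i ^ 2 := by
    rw [show clique k n = (indep k n)ᶜ by ext; simp, sum_add_sum_compl]
    simp [dotProduct, sq]
  rw [dotProduct_adjMatrix_deleteEdges_mulVec _ hab, dotProduct_adjMatrix_mulVec, hsq, hxa, hxb]
  simp only [sum_testVector_indep (b := b) (show k ≤ n by omega) (fun y => y),
    sum_testVector_indep (b := b) (show k ≤ n by omega) (· ^ 2),
    sum_testVector_of_subset_clique subset_rfl (fun y => y),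
    sum_testVector_of_subset_clique subset_rfl (· ^ 2),
    sum_testVector_of_subset_clique hcore_clique (fun y => y), card_clique, card_core h,
    if_pos hb_clique]
  push_cast [show k ≤ n by omega]
  split_ifs <;> ring

/-- When `n = 2k + 1` the vertices outside the core have degree exactly `k`, so `b` has to be
taken in the core, at the price of the `2k²` term. -/
theorem exists_endpoint_margin_pos (hk : 2 ≤ k) (hn1 : 2 * k + 1 ≤ n)
    (hn2 : (n : ℝ) ≤ (k : ℝ) ^ 3 / 2 + k + 1) :
    ∃ b : Fin n, k < b.val ∧ (b ∈ core k n ∨ 2 * k + 2 ≤ n) ∧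
      (if b ∈ core k n then 2 * (k : ℝ) ^ 2 else 0) <
        ((n : ℝ) - k - 1) * ((k : ℝ) ^ 3 - 2 * ((n : ℝ) - k - 1) + 1) := by
  have hkr : (2 : ℝ) ≤ k := by exact_mod_cast hk
  rcases hn1.eq_or_lt with hn | hn
  · have hb_core : (⟨k + 1, by omega⟩ : Fin n) ∈ core k n := by simp; omega
    refine ⟨⟨k + 1, by omega⟩, by simp, Or.inl hb_core, ?_⟩
    have hnr : (n : ℝ) = 2 * k + 1 := by exact_mod_cast hn.symm
    rw [if_pos hb_core, hnr]
    nlinarith [mul_nonneg (sq_nonneg (k : ℝ)) (by nlinarith : (0 : ℝ) ≤ k ^ 2 - 4)]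
  · refine ⟨⟨n - 1, by omega⟩, by simp; omega, Or.inr hn, ?_⟩
    have hnr : (2 * k + 2 : ℝ) ≤ n := by exact_mod_cast hn
    rw [if_neg (by simp; omega)]
    exact mul_pos (by linarith) (by linarith)

end Mgraph

/-- For `k ≥ 2` and `2k+1 ≤ n ≤ k³/2 + k + 1`, there is a proper spanning
subgraph of `M_k(n)` with minimum degree at least `k` and spectral radius
exceeding `n - k - 1`. -/
theorem stmt_15 (k n : ℕ) (hk : 2 ≤ k) (hn1 : 2 * k + 1 ≤ n)
    (hn2 : (n : ℝ) ≤ (k : ℝ) ^ 3 / 2 + k + 1) :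
    ∃ G : SimpleGraph (Fin n), ∃ _ : DecidableRel G.Adj,
      k ≤ G.minDegree ∧ G < Mgraph k n ∧ specRad G > (n : ℝ) - k - 1 := by
  classical
  obtain ⟨b, hb, hb_core, hb_margin⟩ := Mgraph.exists_endpoint_margin_pos hk hn1 hn2
  let a : Fin n := ⟨k, by omega⟩
  have hab : (Mgraph k n).Adj a b := Mgraph.adj_of_mem_clique (by simp [a])
    (Mgraph.mem_clique.mpr hb.le) (by simp [a, Fin.ext_iff]; omega)
  refine ⟨_, inferInstance, Mgraph.le_minDegree_deleteEdges hn1 rfl hb hb_core,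
    deleteEdges_singleton_lt _ hab, ?_⟩
  apply lt_specRad_of_mul_dotProduct_lt _ (Mgraph.testVector k n b)
  have := Mgraph.dotProduct_adjMatrix_deleteEdges_mulVec_testVector (k := k) (by omega)
    (a := a) rfl hb
  linarith
end
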